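/- arXiv:2007.04159 — 2 statements merged into one kernel-verified Lean document; each statement's English description precedes it below -/
import Mathlib

section
/- No finite field satisfies the strong uncertainty principle: for every prime power q there exist infinitely many primes p (in particular with p ∤ q) such that μ(F_q,p) ≤ p. -/
/-!
Take primes `p ≡ 1 [MOD 8 * q]`. By quadratic reciprocity `q` is a square mod `p`, so the order
`m` of `q` mod `p` is at most `(p - 1) / 2`, and it is at least `2` once `p > q`. An irreducible
factor `g` of the `p`-th cyclotomic polynomial has degree `m`, so the ideal generated by `g` has
dimension `p - m`. Its nonzero codewords are the linear relations among the powers `ζ ^ i`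
(`i < p`) of a root `ζ` of `g` in the `m`-dimensional space `F(ζ)`. As `p ≥ q + m`, some `m` of
these powers are already dependent: otherwise, modulo the span of `m - 2` of them, the other
`p - m + 2 ≥ q + 2` would lie on distinct lines of a plane, which has only `q + 1`. This gives a
codeword of weight at most `m`, hence `d + dim ≤ p`.
-/

open Polynomial

/-- The ring R(F,n) = F[X]/(X^n - 1). -/
abbrev CycRing (F : Type*) [Field F] (n : ℕ) := AdjoinRoot (X ^ n - Polynomial.C (1 : F))

/-- The unique representative of degree < n of an element of F[X]/(X^n-1). -/
noncomputable def cycRep {F : Type*} [Field F] {n : ℕ} (f : CycRing F n) : F[X] :=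
  if h : n = 0 then 0
  else AdjoinRoot.modByMonicHom (monic_X_pow_sub_C (1 : F) h) f

/-- Hamming weight of an element of F[X]/(X^n-1): the number of nonzero coefficients of
its representative of degree < n. -/
noncomputable def cycWt {F : Type*} [Field F] {n : ℕ} (f : CycRing F n) : ℕ :=
  (cycRep f).support.card

/-- Minimum distance of a cyclic code (ideal of F[X]/(X^n-1)). -/
noncomputable def cycDist {F : Type*} [Field F] {n : ℕ} (I : Ideal (CycRing F n)) : ℕ :=
  sInf {w | ∃ f ∈ I, f ≠ 0 ∧ cycWt f = w}

/-- Dimension of a cyclic code as an F-vector space. -/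
noncomputable def cycDim (F : Type*) [Field F] {n : ℕ} (I : Ideal (CycRing F n)) : ℕ :=
  Module.finrank F (Submodule.restrictScalars F I)

/-- The invariant μ(F,n). -/
noncomputable def mu (F : Type*) [Field F] (n : ℕ) : ℕ :=
  sInf {w | ∃ f : CycRing F n, f ≠ 0 ∧
    cycDist (Ideal.span {f}) + cycDim F (Ideal.span {f}) = w}

open Finset Module Submodule

theorem card_le_card_add_one_of_finrank_eq_two {F Q ι : Type*} [Field F] [Fintype F]
    [AddCommGroup Q] [Module F Q] (hQ : finrank F Q = 2) {w : ι → Q} {s : Finset ι}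
    (hw0 : ∀ i ∈ s, w i ≠ 0) (hw : ∀ i ∈ s, ∀ j ∈ s, ∀ a : F, a • w j = w i → i = j) :
    #s ≤ Fintype.card F + 1 := by
  have : FiniteDimensional F Q := Module.finite_of_finrank_pos (by omega)
  have : Finite Q := Module.finite_of_finite F
  let line : s → Projectivization F Q := fun i => .mk F (w i) (hw0 i i.2)
  have hline : Function.Injective line := fun i j hij => by
    obtain ⟨a, ha⟩ := (Projectivization.mk_eq_mk_iff' F _ _ _ _).1 hij
    exact Subtype.ext (hw i i.2 j j.2 a ha)
  have := Nat.card_le_card_of_injective line hline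
  rwa [Projectivization.card_of_finrank_two F Q hQ, Nat.card_eq_fintype_card, Fintype.card_coe,
    Nat.card_eq_fintype_card] at this

theorem exists_card_le_finrank_not_linearIndepOn {F V ι : Type*} [Field F] [Fintype F]
    [AddCommGroup V] [Module F V] [FiniteDimensional F V] (hV : 2 ≤ finrank F V)
    (v : ι → V) (s : Finset ι) (hs : Fintype.card F + finrank F V ≤ #s) :
    ∃ t ⊆ s, #t ≤ finrank F V ∧ ¬ LinearIndepOn F v (t : Set ι) := by
  classical
  by_contra! hind
  have hnotMem : ∀ u ⊆ s, ∀ i ∈ s, i ∉ u → #u < finrank F V → v i ∉ span F (v '' u) := by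
    intro u hus i his hiu hu
    have := hind (insert i u) (insert_subset his hus) (by rw [card_insert_of_notMem hiu]; omega)
    rw [coe_insert, linearIndepOn_insert (by simpa)] at this
    exact this.2
  obtain ⟨t, hts, ht⟩ := exists_subset_card_eq (show finrank F V - 2 ≤ #s by omega)
  let W := span F (v '' t)
  have hW : finrank F W = finrank F V - 2 := by
    rw [← ht, show W = span F (Set.range fun i : (t : Set ι) => v i) by simp [W, Set.image_eq_range],
      finrank_span_eq_card (hind t hts (by omega))]
    simp
  have hQ : finrank F (V ⧸ W) = 2 := by
    have := W.finrank_quotient_add_finrank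
    omega
  have hcard := card_le_card_add_one_of_finrank_eq_two hQ (w := W.mkQ ∘ v) (s := s \ t)
    (fun i hi => by
      simpa [W] using hnotMem t hts i (mem_sdiff.1 hi).1 (mem_sdiff.1 hi).2 (by omega))
    (fun i hi j hj a ha => by_contra fun hij => by
      apply hnotMem (insert j t) (insert_subset (mem_sdiff.1 hj).1 hts) i (mem_sdiff.1 hi).1
        (by simp [(mem_sdiff.1 hi).2, hij]) (by grw [card_insert_le]; omega)
      have hsub : v i - a • v j ∈ W := by
        rw [← Submodule.Quotient.mk_eq_zero]
        simpa [sub_eq_zero] using ha.symm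
      have hj : v j ∈ span F (v '' ↑(insert j t)) := subset_span ⟨j, by simp, rfl⟩
      have hWle : W ≤ span F (v '' ↑(insert j t)) := span_mono (by gcongr; simp)
      simpa using add_mem (hWle hsub) (smul_mem _ a hj))
  rw [card_sdiff_of_subset hts] at hcard
  omega

theorem exists_ne_zero_support_subset_aeval_eq_zero {F A : Type*} [Field F] [Ring A] [Algebra F A]
    {r : A} {t : Finset ℕ} (ht : ¬ LinearIndepOn F (r ^ ·) (t : Set ℕ)) :
    ∃ c : F[X], c ≠ 0 ∧ c.support ⊆ t ∧ aeval r c = 0 := by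
  classical
  simp only [linearIndepOn_iff'', not_forall] at ht
  obtain ⟨u, g, hut, hg, hsum, i, hiu, hgi⟩ := ht
  let c : F[X] := ∑ j ∈ u, C (g j) * X ^ j
  have hcoeff : ∀ j, c.coeff j = g j := by
    intro j
    simp only [c, finsetSum_coeff, coeff_C_mul_X_pow, sum_ite_eq, ite_eq_left_iff]
    exact fun hj => (hg j hj).symm
  refine ⟨c, fun h => hgi (by rw [← hcoeff, h, coeff_zero]), fun j hj => ?_, ?_⟩
  · by_contra hjt
    exact mem_support_iff.1 hj (by rw [hcoeff]; exact hg j fun hju => hjt (hut hju))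
  · simpa [c, aeval_def, eval₂_finsetSum, Algebra.smul_def] using hsum

theorem isSquare_natCast_of_modEq_one {p : ℕ} [Fact p.Prime] (q : ℕ) (h : p ≡ 1 [MOD 8 * q]) :
    IsSquare (q : ZMod p) := by
  induction q using Nat.recOnMul with
  | zero => exact ⟨0, by simp⟩
  | one => exact ⟨1, by simp⟩
  | prime l hl =>
    have : Fact l.Prime := ⟨hl⟩
    rcases hl.eq_two_or_odd with rfl | hodd
    · have h16 : p % 16 = 1 := h
      exact_mod_cast (ZMod.exists_sq_eq_two_iff (by omega)).2 (Or.inl (by omega))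
    · have h4 : p % 4 = 1 := h.of_dvd (Dvd.intro_left (2 * l) (by ring))
      rw [ZMod.exists_sq_eq_prime_iff_of_mod_four_eq_one h4 (by omega)]
      have hpl : (p : ZMod l) = 1 := by
        exact_mod_cast (ZMod.natCast_eq_natCast_iff _ _ _).2 (h.of_dvd (Dvd.intro_left 8 rfl))
      exact ⟨1, by simp [hpl]⟩
  | mul a b iha ihb =>
    push_cast
    exact (iha (h.of_dvd ⟨b, by ring⟩)).mul (ihb (h.of_dvd ⟨a, by ring⟩))

theorem natDegree_eq_orderOf_of_dvd_cyclotomic {F : Type*} [Field F] [Fintype F] {n : ℕ}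
    {g : F[X]} (hn : (Fintype.card F).Coprime n) (hg : g ∣ cyclotomic n F)
    (hirr : Irreducible g) : g.natDegree = orderOf (Fintype.card F : ZMod n) := by
  obtain ⟨l, -, e, hl, hcard⟩ := FiniteField.card' F
  have : Fact l.Prime := ⟨hl⟩
  have hln : l.Coprime n := Nat.Coprime.coprime_dvd_left (dvd_pow_self l e.ne_zero) (hcard ▸ hn)
  rw [natDegree_of_dvd_cyclotomic_of_irreducible hcard hln hg hirr,
    ← orderOf_units, ZMod.coe_unitOfCoprime, hcard]

theorem cycRep_mk {F : Type*} [Field F] {n : ℕ} {c : F[X]} (hc : c.degree < n) :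
    cycRep (AdjoinRoot.mk (X ^ n - C 1) c) = c := by
  unfold cycRep
  split_ifs with hn
  · subst hn
    exact (degree_eq_bot.1 (Nat.WithBot.lt_zero_iff.1 hc)).symm
  · rw [AdjoinRoot.modByMonicHom_mk, (modByMonic_eq_self_iff (monic_X_pow_sub_C 1 hn)).2]
    rwa [degree_X_pow_sub_C (Nat.pos_of_ne_zero hn)]

theorem mu_le_cycWt_add_cycDim {F : Type*} [Field F] {n : ℕ} {f c : CycRing F n}
    (hc : c ∈ Ideal.span {f}) (hc0 : c ≠ 0) :
    mu F n ≤ cycWt c + cycDim F (Ideal.span {f}) := by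
  have hf : f ≠ 0 := by rintro rfl; simp_all
  calc mu F n ≤ cycDist (Ideal.span {f}) + cycDim F (Ideal.span {f}) := Nat.sInf_le ⟨f, hf, rfl⟩
    _ ≤ cycWt c + cycDim F (Ideal.span {f}) := by
      gcongr
      exact Nat.sInf_le ⟨c, hc, hc0, rfl⟩

theorem cycDim_span_mk_le {F : Type*} [Field F] {n : ℕ} (hn : 0 < n) {g : F[X]}
    (hg : g ∣ X ^ n - C 1) :
    cycDim F (Ideal.span {AdjoinRoot.mk (X ^ n - C 1) g}) ≤ n - g.natDegree := by
  let φ := AdjoinRoot.algHomOfDvd F (X ^ n - C 1) g hg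
  have hφ : ∀ h : F[X], φ (AdjoinRoot.mk _ h) = AdjoinRoot.mk g h := AdjoinRoot.aeval_eq
  have : Module.Finite F (CycRing F n) := (monic_X_pow_sub_C 1 hn.ne').finite_adjoinRoot
  have hrange : LinearMap.range φ.toLinearMap = ⊤ := LinearMap.range_eq_top.2 fun y => by
    obtain ⟨h, rfl⟩ := AdjoinRoot.mk_surjective y
    exact ⟨AdjoinRoot.mk _ h, hφ h⟩
  have hker : (Ideal.span {AdjoinRoot.mk _ g}).restrictScalars F ≤ LinearMap.ker φ.toLinearMap := by
    intro x hx
    obtain ⟨y, rfl⟩ := Ideal.mem_span_singleton'.1 hx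
    simp [hφ]
  have hrank := LinearMap.finrank_range_add_finrank_ker φ.toLinearMap
  have hdimR : finrank F (CycRing F n) = n :=
    finrank_quotient_span_eq_natDegree.trans (natDegree_X_pow_sub_C)
  have hdimK : finrank F (AdjoinRoot g) = g.natDegree := finrank_quotient_span_eq_natDegree
  rw [hrange, finrank_top, hdimK, hdimR] at hrank
  calc cycDim F _ ≤ finrank F (LinearMap.ker φ.toLinearMap) := Submodule.finrank_mono hker
    _ = n - g.natDegree := by omega

theorem mu_le_of_dvd {F : Type*} [Field F] {n : ℕ} (hn : 0 < n) {g c : F[X]}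
    (hg : g ∣ X ^ n - C 1) (hgc : g ∣ c) (hc : c ≠ 0) (hcn : c.degree < n) :
    mu F n ≤ #c.support + (n - g.natDegree) := by
  have hmem : AdjoinRoot.mk _ c ∈ Ideal.span {AdjoinRoot.mk (X ^ n - C 1) g} :=
    Ideal.mem_span_singleton.2 (map_dvd _ hgc)
  have hc0 : AdjoinRoot.mk (X ^ n - C 1) c ≠ 0 := by
    rw [Ne, AdjoinRoot.mk_eq_zero]
    exact fun h => hc (eq_zero_of_dvd_of_degree_lt h (by rwa [degree_X_pow_sub_C hn]))
  have := mu_le_cycWt_add_cycDim hmem hc0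
  rw [cycWt, cycRep_mk hcn] at this
  exact this.trans (Nat.add_le_add_left (cycDim_span_mk_le hn hg) _)

theorem mu_le_self_of_irreducible_dvd {F : Type*} [Field F] [Fintype F] {n : ℕ} {g : F[X]}
    (hirr : Irreducible g) (hg : g ∣ X ^ n - C 1) (hg2 : 2 ≤ g.natDegree)
    (hgn : Fintype.card F + g.natDegree ≤ n) : mu F n ≤ n := by
  have : Fact (Irreducible g) := ⟨hirr⟩
  have hK : finrank F (AdjoinRoot g) = g.natDegree := finrank_quotient_span_eq_natDegree
  have : FiniteDimensional F (AdjoinRoot g) := Module.finite_of_finrank_pos (by omega)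
  obtain ⟨t, htn, htg, hdep⟩ := exists_card_le_finrank_not_linearIndepOn (hK ▸ hg2)
    (AdjoinRoot.root g ^ ·) (range n) (by rw [card_range, hK]; omega)
  obtain ⟨c, hc0, hct, hc⟩ := exists_ne_zero_support_subset_aeval_eq_zero hdep
  have hgc : g ∣ c := AdjoinRoot.mk_eq_zero.1 (by rw [← AdjoinRoot.aeval_eq]; exact hc)
  have hcn : c.degree < n := degree_le_natDegree.trans_lt
    (Nat.cast_lt.2 (mem_range.1 (htn (hct (natDegree_mem_support_of_nonzero hc0)))))
  calc mu F n ≤ #c.support + (n - g.natDegree) := mu_le_of_dvd (by omega) hg hgc hc0 hcn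
    _ ≤ g.natDegree + (n - g.natDegree) := by grw [card_le_card hct, htg, hK]
    _ = n := by omega

theorem mu_le_self_of_isSquare {F : Type*} [Field F] [Fintype F] {p : ℕ} [hp : Fact p.Prime]
    (hpq : 2 * Fintype.card F < p) (hsq : IsSquare (Fintype.card F : ZMod p)) : mu F p ≤ p := by
  set q := Fintype.card F
  have hq : 1 < q := Fintype.one_lt_card
  have hp_ndvd : ¬ p ∣ q := fun h => absurd (Nat.le_of_dvd (by omega) h) (by omega)
  obtain ⟨g, hirr, hg⟩ := WfDvdMonoid.exists_irreducible_factor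
    (not_isUnit_of_degree_pos _ (degree_cyclotomic_pos p F hp.out.pos)) (cyclotomic_ne_zero p F)
  have hm : g.natDegree = orderOf (q : ZMod p) := natDegree_eq_orderOf_of_dvd_cyclotomic
    (Nat.coprime_comm.1 (hp.out.coprime_iff_not_dvd.2 hp_ndvd)) hg hirr
  have hm_le : g.natDegree ≤ p / 2 := hm ▸ orderOf_le_of_pow_eq_one (by omega)
    ((ZMod.euler_criterion p ((ZMod.natCast_eq_zero_iff q p).not.2 hp_ndvd)).1 hsq)
  have hm_ne_one : g.natDegree ≠ 1 := by
    rw [hm, Ne, orderOf_eq_one_iff]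
    intro h1
    have := congrArg ZMod.val h1
    rw [ZMod.val_natCast_of_lt (by omega), ZMod.val_one] at this
    omega
  have := hirr.natDegree_pos
  exact mu_le_self_of_irreducible_dvd hirr
    (by simpa using hg.trans (cyclotomic.dvd_X_pow_sub_one p F)) (by omega) (by omega)

/-- No finite field satisfies the strong uncertainty principle: for every prime power q
(i.e., every finite field F_q) there are infinitely many primes p, with p ∤ q,
such that μ(F_q,p) ≤ p. -/
theorem no_strong_UP (q : ℕ) (F : Type*) [Field F] [Fintype F]
    (hq : Fintype.card F = q) :
    {p : ℕ | p.Prime ∧ ¬ p ∣ q ∧ mu F p ≤ p}.Infinite := by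
  subst hq
  have hq1 : 1 < Fintype.card F := Fintype.one_lt_card
  refine Set.infinite_of_forall_exists_gt fun N => ?_
  obtain ⟨p, hp, hNp, hpq⟩ := Nat.exists_prime_gt_modEq_one (k := 8 * Fintype.card F)
    (max N (2 * Fintype.card F)) (by omega)
  have : Fact p.Prime := ⟨hp⟩
  have h2q : 2 * Fintype.card F < p := (le_max_right _ _).trans_lt hNp
  exact ⟨p, ⟨hp, fun h => absurd (Nat.le_of_dvd (by omega) h) (by omega),
    mu_le_self_of_isSquare h2q (isSquare_natCast_of_modEq_one _ hpq)⟩, (le_max_left _ _).trans_lt hNp⟩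
end

section
/- Let q be a prime power, n ≥ 1 with gcd(n,q) = 1, and ζ a primitive n-th root of unity in an algebraic closure K of F_q. For every nonzero f ∈ R(F_q,n), the dimension of the ideal C(f) generated by f as an F_q-vector space equals w_H(f̂), the Hamming weight of the Mattson–Solomon vector f̂ = (f(ζ), f(ζ²), …, f(ζ^n)) of the degree-< n representative of f. -/
open Polynomial

/-- Hamming weight of a vector: its number of nonzero coordinates. -/
noncomputable def wt {ι α : Type*} [Zero α] (v : ι → α) : ℕ := Set.ncard {i | v i ≠ 0}

/-- The Mattson–Solomon vector (g(ζ), g(ζ²), …, g(ζⁿ)) of a polynomial g over F. -/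
noncomputable def msVecPoly {F : Type*} [Field F] (n : ℕ) (ζ : AlgebraicClosure F)
    (g : Polynomial F) : Fin n → AlgebraicClosure F :=
  fun j => Polynomial.aeval (ζ ^ ((j : ℕ) + 1)) g

/-! Let g = gcd(f, Xⁿ - 1). Then C(f) = C(g), and R(F,n)/C(g) ≅ F[X]/(g), so dim C(f) = n - deg g.
On the other side f(ζʲ) = 0 iff g(ζʲ) = 0. As n is invertible in F, Xⁿ - 1 is separable, so g has
deg g distinct roots, all among the n distinct powers ζ, …, ζⁿ; hence w_H(f̂) = n - deg g too. -/

theorem FiniteField.natCast_ne_zero_of_coprime_card {F : Type*} [Field F] [Fintype F] {n : ℕ}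
    (h : n.Coprime (Fintype.card F)) : (n : F) ≠ 0 := by
  have hcop : IsCoprime (n : F) (Fintype.card F : F) := by
    simpa using (Nat.isCoprime_iff_coprime.mpr h).intCast (R := F)
  rw [FiniteField.cast_card_eq_zero, isCoprime_zero_right] at hcop
  exact hcop.ne_zero

theorem mk_cycRep {F : Type*} [Field F] {n : ℕ} (hn : n ≠ 0) (f : CycRing F n) :
    AdjoinRoot.mk _ (cycRep f) = f := by
  rw [cycRep, dif_neg hn]
  exact AdjoinRoot.mk_leftInverse _ f

namespace AdjoinRoot

theorem span_mk_eq_span_mk_gcd {F : Type*} [Field F] [DecidableEq F] (P p : F[X]) :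
    Ideal.span {mk P p} = Ideal.span {mk P (EuclideanDomain.gcd p P)} := by
  apply le_antisymm <;> rw [Ideal.span_singleton_le_span_singleton]
  · obtain ⟨c, hc⟩ := EuclideanDomain.gcd_dvd_left p P
    exact ⟨mk P c, by rw [← map_mul, ← hc]⟩
  · refine ⟨mk P (EuclideanDomain.gcdA p P), ?_⟩
    rw [EuclideanDomain.gcd_eq_gcd_ab, map_add, map_mul, map_mul, mk_self, zero_mul, add_zero]

theorem finrank_span_mk_add_natDegree {F : Type*} [Field F] {P g : F[X]} (hP : P ≠ 0)
    (hg : g ∣ P) :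
    Module.finrank F ((Ideal.span {mk P g}).restrictScalars F) + g.natDegree = P.natDegree := by
  have : Module.Finite F (AdjoinRoot P) := (powerBasis hP).finite
  have hmap :
      (Ideal.span {g}).map (Ideal.Quotient.mkₐ F (Ideal.span {P})) = Ideal.span {mk P g} := by
    rw [Ideal.map_span, Set.image_singleton]; rfl
  have hquot : (AdjoinRoot P ⧸ Ideal.span {mk P g}) ≃ₐ[F] F[X] ⧸ Ideal.span {g} :=
    hmap ▸ DoubleQuot.quotQuotEquivQuotOfLEₐ F (Ideal.span_singleton_le_span_singleton.mpr hg)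
  rw [← finrank_quotient_span_eq_natDegree (f := g), ← hquot.toLinearEquiv.finrank_eq,
    ← (Submodule.Quotient.restrictScalarsEquiv F _).finrank_eq, add_comm,
    Submodule.finrank_quotient_add_finrank, (powerBasis hP).finrank, powerBasis_dim]

end AdjoinRoot

theorem Polynomial.aeval_gcd_eq_zero_iff {F A : Type*} [Field F] [DecidableEq F] [CommRing A]
    [Algebra F A] {P : F[X]} {x : A} (hx : aeval x P = 0) (p : F[X]) :
    aeval x (EuclideanDomain.gcd p P) = 0 ↔ aeval x p = 0 := by
  refine ⟨fun h => ?_, fun h => ?_⟩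
  · obtain ⟨c, hc⟩ := EuclideanDomain.gcd_dvd_left p P
    rw [hc, map_mul, h, zero_mul]
  · rw [EuclideanDomain.gcd_eq_gcd_ab, map_add, map_mul, map_mul, h, hx, zero_mul, zero_mul,
      add_zero]

namespace IsPrimitiveRoot

variable {K : Type*} [Field K] {ζ : K} {n : ℕ}

theorem pow_succ_injective (hζ : IsPrimitiveRoot ζ n) :
    Function.Injective fun j : Fin n => ζ ^ ((j : ℕ) + 1) := by
  intro a b hab
  have : ζ ^ (a : ℕ) = ζ ^ (b : ℕ) :=
    mul_right_cancel₀ (hζ.ne_zero a.pos.ne') (by simpa only [pow_succ] using hab)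
  exact Fin.ext (hζ.pow_inj a.isLt b.isLt this)

theorem exists_pow_succ_eq [NeZero n] (hζ : IsPrimitiveRoot ζ n) {ξ : K} (hξ : ξ ^ n = 1) :
    ∃ j < n, ζ ^ (j + 1) = ξ := by
  obtain ⟨j, hj, hζj⟩ := hζ.eq_pow_of_pow_eq_one (ξ := ξ / ζ)
    (by rw [div_pow, hξ, hζ.pow_eq_one, div_one])
  exact ⟨j, hj, by rw [pow_succ, hζj, div_mul_cancel₀ _ (hζ.ne_zero (NeZero.ne n))]⟩

end IsPrimitiveRoot

section MattsonSolomon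

variable {F : Type*} [Field F] {n : ℕ} {ζ : AlgebraicClosure F}

theorem msVecPoly_eq_zero_iff_gcd [DecidableEq F] (hζ : ζ ^ n = 1) (p : F[X]) (j : Fin n) :
    msVecPoly n ζ (EuclideanDomain.gcd p (X ^ n - C 1)) j = 0 ↔ msVecPoly n ζ p j = 0 :=
  aeval_gcd_eq_zero_iff
    (by rw [map_sub, aeval_X_pow, aeval_C, map_one, ← pow_mul, mul_comm, pow_mul, hζ, one_pow,
      sub_self]) p

theorem ncard_zeros_msVecPoly [NeZero n] (hζ : IsPrimitiveRoot ζ n) {g : F[X]}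
    (hg : g ∣ X ^ n - C 1) (hsep : g.Separable) :
    {j | msVecPoly n ζ g j = 0}.ncard = g.natDegree := by
  have himage : (fun j : Fin n => ζ ^ ((j : ℕ) + 1)) '' {j | msVecPoly n ζ g j = 0} =
      g.rootSet (AlgebraicClosure F) := by
    ext x
    simp only [msVecPoly, Set.mem_image, Set.mem_ofPred_eq, mem_rootSet]
    constructor
    · rintro ⟨j, hj, rfl⟩
      exact ⟨hsep.ne_zero, hj⟩
    · rintro ⟨-, hx⟩
      have hxn : x ^ n = 1 := by
        simpa [sub_eq_zero] using aeval_eq_zero_of_dvd_aeval_eq_zero hg hx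
      obtain ⟨j, hj, rfl⟩ := hζ.exists_pow_succ_eq hxn
      exact ⟨⟨j, hj⟩, hx, rfl⟩
  rw [← Set.ncard_image_of_injective _ hζ.pow_succ_injective, himage, ← Nat.card_coe_set_eq,
    Nat.card_eq_fintype_card, card_rootSet_eq_natDegree hsep (IsAlgClosed.splits _)]

theorem wt_msVecPoly_add_natDegree_gcd [DecidableEq F] [NeZero n] (hζ : IsPrimitiveRoot ζ n)
    (hsep : (X ^ n - C (1 : F)).Separable) (p : F[X]) :
    wt (msVecPoly n ζ p) + (EuclideanDomain.gcd p (X ^ n - C 1)).natDegree = n := by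
  have hdvd := EuclideanDomain.gcd_dvd_right p (X ^ n - C 1)
  have hsupp : {j | msVecPoly n ζ p j ≠ 0} =
      {j | msVecPoly n ζ (EuclideanDomain.gcd p (X ^ n - C 1)) j = 0}ᶜ := by
    ext j
    simp only [Set.mem_ofPred_eq, Set.mem_compl_iff, msVecPoly_eq_zero_iff_gcd hζ.pow_eq_one]
  rw [wt, ← ncard_zeros_msVecPoly hζ hdvd (hsep.of_dvd hdvd), hsupp, add_comm,
    Set.ncard_add_ncard_compl, Nat.card_eq_fintype_card, Fintype.card_fin]

end MattsonSolomon

theorem dim_eq_wt_msVec_general (q n : ℕ) (F : Type*) [Field F] [Fintype F]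
    (hq : Fintype.card F = q) (hn : 1 ≤ n) (hcop : Nat.Coprime n q)
    (ζ : AlgebraicClosure F) (hζ : IsPrimitiveRoot ζ n)
    (f : CycRing F n) :
    cycDim F (Ideal.span {f}) = wt (msVecPoly n ζ (cycRep f)) := by
  classical
  have : NeZero n := ⟨by omega⟩
  have hsep : (X ^ n - C (1 : F)).Separable :=
    separable_X_pow_sub_C 1 (FiniteField.natCast_ne_zero_of_coprime_card (hq ▸ hcop)) one_ne_zero
  have hspan : Ideal.span {f} =
      Ideal.span {AdjoinRoot.mk _ (EuclideanDomain.gcd (cycRep f) (X ^ n - C 1))} := by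
    rw [← AdjoinRoot.span_mk_eq_span_mk_gcd, mk_cycRep (NeZero.ne n)]
  have hdim : cycDim F (Ideal.span {f}) +
      (EuclideanDomain.gcd (cycRep f) (X ^ n - C 1)).natDegree = n := by
    rw [cycDim, hspan,
      AdjoinRoot.finrank_span_mk_add_natDegree hsep.ne_zero (EuclideanDomain.gcd_dvd_right _ _),
      natDegree_X_pow_sub_C]
  have hwt := wt_msVecPoly_add_natDegree_gcd hζ hsep (cycRep f)
  omega

/-- For every nonzero f ∈ R(F_q,n), with gcd(n,q) = 1, the dimension of the cyclic code
C(f) equals the Hamming weight of the Mattson–Solomon vector of the degree-< n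
representative of f. -/
theorem dim_eq_wt_msVec (q n : ℕ) (F : Type*) [Field F] [Fintype F]
    (hq : Fintype.card F = q) (hn : 1 ≤ n) (hcop : Nat.Coprime n q)
    (ζ : AlgebraicClosure F) (hζ : IsPrimitiveRoot ζ n)
    (f : CycRing F n) (hf : f ≠ 0) :
    cycDim F (Ideal.span {f}) = wt (msVecPoly n ζ (cycRep f)) :=
  dim_eq_wt_msVec_general q n F hq hn hcop ζ hζ f
end
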